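/- Monotone likelihood ratio in a single parameter: with f_{k,i}(p) the Poisson binomial probabilities for parameters p = (p₁,…,p_k) ∈ (0,1)^k, for each 1 ≤ i ≤ k and each coordinate j, the ratio r_{k,i}(p) = f_{k,i}(p)/f_{k,i−1}(p) is strictly increasing as a function of p_j (with the other coordinates fixed). -/

import Mathlib

/-!
Split off the factor `(1 - p_j) + p_j z` from the generating polynomial: with `h` the
coefficients of the product of the remaining factors,
`f_i = (1 - p_j) h_i + p_j h_{i-1}` and `f_{i-1} = (1 - p_j) h_{i-1} + p_j h_{i-2}`.
A ratio of two such mixtures is strictly increasing in `p_j` exactly when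
`h_i h_{i-2} < h_{i-1}^2`, i.e. by the strict log-concavity of the Poisson binomial
coefficients (Newton's inequality). Log-concavity, together with the support being an
initial segment, is preserved under multiplication by a linear factor with positive
coefficients, which gives it by induction on the number of factors.
-/

/-- The Poisson binomial probability `f_{k,i}(p)`: the coefficient of `z^i` in
`∏ⱼ ((1-pⱼ) + pⱼ z)`. -/
def poissonBinomial (k : ℕ) (p : Fin k → ℝ) (i : ℕ) : ℝ :=
  ∑ S ∈ Finset.powersetCard i (Finset.univ : Finset (Fin k)),
    (∏ j ∈ S, p j) * ∏ j ∈ Sᶜ, (1 - p j)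

open Polynomial Finset

noncomputable def poissonBinomialPoly {ι : Type*} (p : ι → ℝ) (s : Finset ι) : ℝ[X] :=
  ∏ l ∈ s, (C (1 - p l) + C (p l) * X)

theorem coeff_poissonBinomialPoly {ι : Type*} [DecidableEq ι] (p : ι → ℝ) (s : Finset ι)
    (i : ℕ) :
    (poissonBinomialPoly p s).coeff i =
      ∑ S ∈ s.powersetCard i, (∏ l ∈ S, p l) * ∏ l ∈ s \ S, (1 - p l) := by
  have hterm : ∀ t ∈ s.powerset,
      ((∏ l ∈ t, C (p l) * X) * ∏ l ∈ s \ t, C (1 - p l)).coeff i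
        = if t.card = i then (∏ l ∈ t, p l) * ∏ l ∈ s \ t, (1 - p l) else 0 := by
    intro t _
    rw [prod_mul_distrib, prod_const, ← map_prod, ← map_prod,
      mul_comm (C (∏ x ∈ t, p x) * X ^ t.card), ← mul_assoc, ← map_mul, coeff_C_mul,
      coeff_X_pow]
    by_cases h : i = t.card <;> simp [h, mul_comm, eq_comm]
  simp_rw [poissonBinomialPoly, add_comm (C (1 - p _)), prod_add, finsetSum_coeff]
  rw [sum_congr rfl hterm, sum_ite, sum_const_zero, add_zero, powersetCard_eq_filter]

theorem poissonBinomial_eq_coeff (k : ℕ) (p : Fin k → ℝ) (i : ℕ) :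
    poissonBinomial k p i = (poissonBinomialPoly p univ).coeff i := by
  rw [coeff_poissonBinomialPoly, poissonBinomial]
  exact sum_congr rfl fun S _ => by rw [compl_eq_univ_sdiff]

theorem poissonBinomialPoly_eq_mul_erase {ι : Type*} [DecidableEq ι] (p : ι → ℝ)
    {s : Finset ι} {a : ι} (ha : a ∈ s) :
    poissonBinomialPoly p s = (C (1 - p a) + C (p a) * X) * poissonBinomialPoly p (s.erase a) :=
  (mul_prod_erase s _ ha).symm

section LinearFactor

variable (u v : ℝ) (G : ℝ[X])

theorem coeff_linear_mul (n : ℕ) :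
    ((C u + C v * X) * G).coeff n = u * G.coeff n + v * (X * G).coeff n := by
  rw [add_mul, mul_assoc, coeff_add, coeff_C_mul, coeff_C_mul]

theorem coeff_linear_mul_zero : ((C u + C v * X) * G).coeff 0 = u * G.coeff 0 := by
  rw [coeff_linear_mul, coeff_X_mul_zero, mul_zero, add_zero]

theorem coeff_linear_mul_succ (n : ℕ) :
    ((C u + C v * X) * G).coeff (n + 1) = u * G.coeff (n + 1) + v * G.coeff n := by
  rw [coeff_linear_mul, coeff_X_mul]

theorem sq_coeff_one_sub_linear_mul :
    ((C u + C v * X) * G).coeff 1 ^ 2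
        - ((C u + C v * X) * G).coeff 2 * ((C u + C v * X) * G).coeff 0 =
      u ^ 2 * (G.coeff 1 ^ 2 - G.coeff 2 * G.coeff 0) + u * v * (G.coeff 1 * G.coeff 0)
        + v ^ 2 * G.coeff 0 ^ 2 := by
  rw [coeff_linear_mul_zero, coeff_linear_mul_succ _ _ _ 0, coeff_linear_mul_succ _ _ _ 1]
  ring

theorem sq_coeff_sub_linear_mul (r : ℕ) :
    ((C u + C v * X) * G).coeff (r + 2) ^ 2
        - ((C u + C v * X) * G).coeff (r + 3) * ((C u + C v * X) * G).coeff (r + 1) =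
      u ^ 2 * (G.coeff (r + 2) ^ 2 - G.coeff (r + 3) * G.coeff (r + 1))
        + v ^ 2 * (G.coeff (r + 1) ^ 2 - G.coeff (r + 2) * G.coeff r)
        + u * v * (G.coeff (r + 2) * G.coeff (r + 1) - G.coeff (r + 3) * G.coeff r) := by
  rw [coeff_linear_mul_succ _ _ _ r, coeff_linear_mul_succ _ _ _ (r + 1),
    coeff_linear_mul_succ _ _ _ (r + 2)]
  ring

end LinearFactor

structure StrictLogConcaveUpTo (c : ℕ → ℝ) (m : ℕ) : Prop where
  pos : ∀ n ≤ m, 0 < c n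
  eq_zero : ∀ n, m < n → c n = 0
  mul_lt_sq : ∀ r, r + 1 ≤ m → c (r + 2) * c r < c (r + 1) ^ 2

namespace StrictLogConcaveUpTo

variable {c : ℕ → ℝ} {m : ℕ}

theorem nonneg (hc : StrictLogConcaveUpTo c m) (n : ℕ) : 0 ≤ c n := by
  rcases le_or_gt n m with hn | hn
  · exact (hc.pos n hn).le
  · exact (hc.eq_zero n hn).ge

theorem mul_le_sq (hc : StrictLogConcaveUpTo c m) (r : ℕ) :
    c (r + 2) * c r ≤ c (r + 1) ^ 2 := by
  rcases le_or_gt (r + 1) m with hr | hr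
  · exact (hc.mul_lt_sq r hr).le
  · rw [hc.eq_zero (r + 2) (by omega), zero_mul]
    positivity

theorem mul_le_mul_succ (hc : StrictLogConcaveUpTo c m) (r : ℕ) :
    c (r + 3) * c r ≤ c (r + 2) * c (r + 1) := by
  rcases le_or_gt (r + 2) m with hr | hr
  · have key : c (r + 3) * c r * (c (r + 2) * c (r + 1)) ≤
        c (r + 2) * c (r + 1) * (c (r + 2) * c (r + 1)) :=
      calc c (r + 3) * c r * (c (r + 2) * c (r + 1))
          = c (r + 3) * c (r + 1) * (c (r + 2) * c r) := by ring
        _ ≤ c (r + 2) ^ 2 * c (r + 1) ^ 2 :=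
          mul_le_mul (hc.mul_le_sq (r + 1)) (hc.mul_le_sq r)
            (mul_nonneg (hc.nonneg _) (hc.nonneg _)) (sq_nonneg _)
        _ = c (r + 2) * c (r + 1) * (c (r + 2) * c (r + 1)) := by ring
    exact le_of_mul_le_mul_right key (mul_pos (hc.pos (r + 2) hr) (hc.pos (r + 1) (by omega)))
  · rw [hc.eq_zero (r + 3) (by omega), zero_mul]
    exact mul_nonneg (hc.nonneg _) (hc.nonneg _)

theorem linear_mul {u v : ℝ} {G : ℝ[X]} (hG : StrictLogConcaveUpTo G.coeff m)
    (hu : 0 < u) (hv : 0 < v) : StrictLogConcaveUpTo ((C u + C v * X) * G).coeff (m + 1) where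
  pos n hn := by
    rcases n with _ | n
    · rw [coeff_linear_mul_zero]
      exact mul_pos hu (hG.pos 0 m.zero_le)
    · rw [coeff_linear_mul_succ]
      exact add_pos_of_nonneg_of_pos (mul_nonneg hu.le (hG.nonneg _))
        (mul_pos hv (hG.pos n (by omega)))
  eq_zero n hn := by
    obtain ⟨n, rfl⟩ : ∃ n', n = n' + 1 := ⟨n - 1, by omega⟩
    rw [coeff_linear_mul_succ, hG.eq_zero (n + 1) (by omega), hG.eq_zero n (by omega)]
    ring
  mul_lt_sq r hr := by
    rw [← sub_pos]
    rcases r with _ | r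
    · rw [sq_coeff_one_sub_linear_mul]
      have h0 := hG.pos 0 m.zero_le
      have hW : 0 ≤ G.coeff 1 ^ 2 - G.coeff 2 * G.coeff 0 := sub_nonneg.2 (hG.mul_le_sq 0)
      have hcross : 0 ≤ G.coeff 1 * G.coeff 0 := mul_nonneg (hG.nonneg 1) h0.le
      positivity
    · rw [sq_coeff_sub_linear_mul]
      have hW : 0 ≤ G.coeff (r + 2) ^ 2 - G.coeff (r + 3) * G.coeff (r + 1) :=
        sub_nonneg.2 (hG.mul_le_sq (r + 1))
      have hS : 0 < G.coeff (r + 1) ^ 2 - G.coeff (r + 2) * G.coeff r :=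
        sub_pos.2 (hG.mul_lt_sq r (by omega))
      have hcross : 0 ≤ G.coeff (r + 2) * G.coeff (r + 1) - G.coeff (r + 3) * G.coeff r :=
        sub_nonneg.2 (hG.mul_le_mul_succ r)
      positivity

theorem coeff_succ_mul_lt {G : ℝ[X]} (hG : StrictLogConcaveUpTo G.coeff m) {n : ℕ}
    (hn : n ≤ m) : G.coeff (n + 1) * (X * G).coeff n < (X * G).coeff (n + 1) * G.coeff n := by
  rw [coeff_X_mul, ← sq]
  rcases n with _ | r
  · rw [coeff_X_mul_zero, mul_zero]
    exact pow_pos (hG.pos 0 hn) 2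
  · rw [coeff_X_mul]
    exact hG.mul_lt_sq r hn

end StrictLogConcaveUpTo

theorem strictLogConcaveUpTo_poissonBinomialPoly {ι : Type*} [DecidableEq ι] {p : ι → ℝ}
    {s : Finset ι} (hp : ∀ l ∈ s, p l ∈ Set.Ioo (0 : ℝ) 1) :
    StrictLogConcaveUpTo (poissonBinomialPoly p s).coeff s.card := by
  induction s using Finset.induction_on with
  | empty =>
    rw [card_empty]
    refine ⟨fun n hn => ?_, fun n hn => ?_, fun r hr => by omega⟩
    · simp [poissonBinomialPoly, Nat.le_zero.mp hn]
    · simp [poissonBinomialPoly, coeff_one, hn.ne']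
  | insert a s ha ih =>
    have hpa := hp a (mem_insert_self a s)
    rw [card_insert_of_notMem ha, poissonBinomialPoly, prod_insert ha]
    exact (ih fun l hl => hp l (mem_insert_of_mem hl)).linear_mul (sub_pos.2 hpa.2) hpa.1

theorem mix_div_mix_lt {a b c d x y : ℝ} (hx : 0 < (1 - x) * c + x * d)
    (hy : 0 < (1 - y) * c + y * d) (had : a * d < b * c) (hxy : x < y) :
    ((1 - x) * a + x * b) / ((1 - x) * c + x * d) <
      ((1 - y) * a + y * b) / ((1 - y) * c + y * d) := by
  have hdet : ((1 - y) * a + y * b) * ((1 - x) * c + x * d)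
      - ((1 - x) * a + x * b) * ((1 - y) * c + y * d) = (y - x) * (b * c - a * d) := by ring
  rw [div_lt_div_iff₀ hx hy, ← sub_pos, hdet]
  exact mul_pos (sub_pos.2 hxy) (sub_pos.2 had)

/-- monotone likelihood ratio in a single parameter: for `p ∈ (0,1)^k`,
`1 ≤ i ≤ k` and a coordinate `j`, the ratio `f_{k,i}(p)/f_{k,i-1}(p)` is strictly
increasing in `p_j` with the other coordinates fixed. -/
theorem stmt15 (k i : ℕ) (h1 : 1 ≤ i) (h2 : i ≤ k) (j : Fin k)
    (p q : Fin k → ℝ) (hp : ∀ l, p l ∈ Set.Ioo (0 : ℝ) 1)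
    (hq : ∀ l, q l ∈ Set.Ioo (0 : ℝ) 1)
    (hpq : ∀ l, l ≠ j → p l = q l) (hlt : p j < q j) :
    poissonBinomial k p i / poissonBinomial k p (i - 1) <
      poissonBinomial k q i / poissonBinomial k q (i - 1) := by
  obtain ⟨n, rfl⟩ : ∃ n, i = n + 1 := ⟨i - 1, by omega⟩
  have hden : ∀ x : Fin k → ℝ, (∀ l, x l ∈ Set.Ioo (0 : ℝ) 1) →
      0 < poissonBinomial k x n :=
    fun x hx => poissonBinomial_eq_coeff k x n ▸
      (strictLogConcaveUpTo_poissonBinomialPoly fun l _ => hx l).pos n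
        (by rw [card_univ, Fintype.card_fin]; omega)
  set H := poissonBinomialPoly p (univ.erase j)
  have hH : StrictLogConcaveUpTo H.coeff (k - 1) := by
    simpa using
      strictLogConcaveUpTo_poissonBinomialPoly (s := univ.erase j) fun l _ => hp l
  have hsplit : ∀ x : Fin k → ℝ, (∀ l, l ≠ j → p l = x l) → ∀ m,
      poissonBinomial k x m = (1 - x j) * H.coeff m + x j * (X * H).coeff m := by
    intro x hx m
    have hxH : poissonBinomialPoly x (univ.erase j) = H :=
      prod_congr rfl fun l hl => by rw [hx l (ne_of_mem_erase hl)]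
    rw [poissonBinomial_eq_coeff, poissonBinomialPoly_eq_mul_erase x (mem_univ j), hxH,
      coeff_linear_mul]
  have hp_den := hden p hp
  have hq_den := hden q hq
  simp only [Nat.add_sub_cancel, hsplit p fun _ _ => rfl, hsplit q hpq] at hp_den hq_den ⊢
  exact mix_div_mix_lt hp_den hq_den (hH.coeff_succ_mul_lt (by omega)) hlt
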